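/- Let n ≥ 1 and let x be an n-bit vector in one's complement representation: its value is v = x.toNat if x.msb = false, and v = x.toNat - (2^n - 1) if x.msb = true. Define y : BitVec (n-1) by letting the i-th bit of y equal (¬ x.msb) AND (the i-th bit of x) for every i < n-1. Then (y.toNat : ℤ) = max(v, 0). (This shows the ReLU circuit remains valid for one's complement coded input.) -/

import Mathlib

namespace BitVec

theorem eq_ite_msb_of_getLsbD_eq_not_msb_and {n m : ℕ} {x : BitVec n} {y : BitVec m}
    (hy : ∀ i < m, y.getLsbD i = (!x.msb && x.getLsbD i)) :
    y = if x.msb then 0#m else x.setWidth m := by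
  refine eq_of_getLsbD_eq fun i hi => ?_
  rw [hy i hi]
  cases x.msb <;> simp [hi]

theorem toNat_setWidth_pred_of_msb_false {n : ℕ} {x : BitVec n} (h : x.msb = false) :
    (x.setWidth (n - 1)).toNat = x.toNat := by
  rw [toNat_setWidth, Nat.mod_eq_of_lt (toNat_lt_of_msb_false h)]

end BitVec

theorem relu_circuit_ones_complement_general (n : ℕ) (x : BitVec n)
    (y : BitVec (n - 1)) (hy : ∀ i < n - 1, y.getLsbD i = (!x.msb && x.getLsbD i)) :
    (y.toNat : ℤ) =
      max (if x.msb then (x.toNat : ℤ) - (2 ^ n - 1) else (x.toNat : ℤ)) 0 := by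
  rw [BitVec.eq_ite_msb_of_getLsbD_eq_not_msb_and hy]
  cases hmsb : x.msb
  · simp [BitVec.toNat_setWidth_pred_of_msb_false hmsb]
  · have hx : (x.toNat : ℤ) < 2 ^ n := by exact_mod_cast x.isLt
    simp only [if_true, BitVec.toNat_ofNat, Nat.zero_mod, Nat.cast_zero]
    omega

/-- Correctness of the ReLU circuit for one's-complement input:
the value of `x` is `x.toNat` if the sign bit is `0` and `x.toNat - (2^n - 1)`
if the sign bit is `1`.  If every bit `i < n-1` of `y` equals
`(¬ msb x) AND (bit i of x)`, then the unsigned value of `y` is `max(v, 0)`. -/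
theorem relu_circuit_ones_complement (n : ℕ) (hn : 1 ≤ n) (x : BitVec n)
    (y : BitVec (n - 1)) (hy : ∀ i < n - 1, y.getLsbD i = (!x.msb && x.getLsbD i)) :
    (y.toNat : ℤ) =
      max (if x.msb then (x.toNat : ℤ) - (2 ^ n - 1) else (x.toNat : ℤ)) 0 :=
  relu_circuit_ones_complement_general n x y hy
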